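/- arXiv:2510.01709 — 2 statements merged into one kernel-verified Lean document; each statement's English description precedes it below -/
import Mathlib

section
/- Let A: R^{m×n} → R^l be a linear map, b ∈ R^l, 0 ≤ r ≤ n ≤ m, f(X) := Σ_{i=n-r+1}^{n} σ_i(X)^2 + (1/2)‖A(X) − b‖^2, and let V ∈ E(X), i.e. V^T V = I_{n-r} and ‖XV‖_F^2 = Σ_{i=n-r+1}^n σ_i(X)^2. Then ‖∇_V g(X,V)‖_F ≤ 2 f(X), where g(X,V) = ‖XV‖_F^2 + (1/2)‖A(X) − b‖^2 and ∇_V g(X,V) = 2X^T X V. -/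
/-!
Diagonalise `XᵀX = U diag(λ) Uᵀ` with `λ` sorted increasingly and let `tᵢ` be the squared norm of
the `i`-th row of `UᵀV`. Orthonormality of the columns of `V` gives `0 ≤ tᵢ ≤ 1` and `∑ tᵢ = k`,
while `‖XV‖² = ∑ λᵢ tᵢ` and `‖XᵀXV‖² = ∑ λᵢ² tᵢ`. If `‖XV‖²` equals the sum `S` of the `k`
smallest eigenvalues, the weights `t` can only charge eigenvalues `≤ c := λ_k`, so
`∑ λᵢ² tᵢ ≤ c ∑ λᵢ tᵢ = c S ≤ S²`. Hence `‖2XᵀXV‖ ≤ 2S ≤ 2f(X)`.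
-/

open Matrix Finset Filter Topology Pointwise

noncomputable section

namespace RankEB

/-- Squared Frobenius norm of a matrix. -/
def frob2 {a b : ℕ} (M : Matrix (Fin a) (Fin b) ℝ) : ℝ := ∑ i, ∑ j, (M i j) ^ 2

/-- Frobenius norm of a matrix. -/
def frob {a b : ℕ} (M : Matrix (Fin a) (Fin b) ℝ) : ℝ := Real.sqrt (frob2 M)

/-- Trace inner product of matrices. -/
def minner {a b : ℕ} (A B : Matrix (Fin a) (Fin b) ℝ) : ℝ := ∑ i, ∑ j, A i j * B i j

/-- Squared Euclidean norm on `ℝ^l`. -/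
def enorm2 {l : ℕ} (v : Fin l → ℝ) : ℝ := ∑ i, (v i) ^ 2

/-- Singular values of a real matrix, in nonincreasing order:
`sVal X i = sqrt` of the `i`-th largest eigenvalue of `Xᵀ X`. -/
def sVal {m n : ℕ} (X : Matrix (Fin m) (Fin n) ℝ) (i : Fin n) : ℝ :=
  Real.sqrt ((Matrix.isHermitian_conjTranspose_mul_self X).eigenvalues
    (Tuple.sort (Matrix.isHermitian_conjTranspose_mul_self X).eigenvalues i.rev))

/-- Sum of the squares of the `n - r` smallest singular values of `X`,
i.e. `∑_{i=r+1}^{n} σ_i(X)^2` (1-indexed with `σ₁ ≥ ⋯ ≥ σₙ`). -/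
def tailSum {m n : ℕ} (r : ℕ) (X : Matrix (Fin m) (Fin n) ℝ) : ℝ :=
  ∑ i ∈ Finset.univ.filter (fun i : Fin n => r ≤ (i : ℕ)), (sVal X i) ^ 2


section Scalar

variable {n k : ℕ} {μ t : Fin n → ℝ}

lemma le_of_sum_eq_of_le_one (ht₁ : ∀ i, t i ≤ 1) (hts : ∑ i, t i = k) : k ≤ n := by
  have := sum_le_sum fun i (_ : i ∈ univ) => ht₁ i
  simp only [hts, sum_const, card_univ, Fintype.card_fin, nsmul_eq_mul, mul_one] at this
  exact_mod_cast this

lemma sum_sq_mul_le_mul_sum_mul {c : ℝ} (hμ : ∀ i, 0 ≤ μ i)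
    (ht₀ : ∀ i, 0 ≤ t i) (ht₁ : ∀ i, t i ≤ 1) (hts : ∑ i, t i = k)
    (hlow : ∀ i : Fin n, i.val < k → μ i ≤ c) (hhigh : ∀ i : Fin n, k ≤ i.val → c ≤ μ i)
    (hmin : ∑ i, μ i * t i ≤ ∑ i with i.val < k, μ i) :
    ∑ i, μ i ^ 2 * t i ≤ c * ∑ i, μ i * t i := by
  have hk := le_of_sum_eq_of_le_one ht₁ hts
  have hlowSum : ∑ i with i.val < k, (μ i - c) ≤ ∑ i with i.val < k, (μ i - c) * t i :=
    sum_le_sum fun i hi => by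
      nlinarith [hlow i (mem_filter.mp hi).2, ht₁ i]
  have htotal : ∑ i, (μ i - c) * t i ≤ ∑ i with i.val < k, (μ i - c) := by
    simp only [sub_mul, sum_sub_distrib, ← mul_sum, hts, sum_const, Fin.card_filter_val_lt,
      min_eq_right hk, nsmul_eq_mul]
    linarith
  have hhighNonneg : ∀ i ∈ ({i | ¬ i.val < k} : Finset (Fin n)), 0 ≤ (μ i - c) * t i :=
    fun i hi => mul_nonneg (sub_nonneg.mpr (hhigh i (by simpa using hi))) (ht₀ i)
  have hhighSum : ∑ i with ¬ i.val < k, (μ i - c) * t i ≤ 0 := by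
    have := sum_filter_add_sum_filter_not univ (fun i : Fin n => i.val < k)
      fun i => (μ i - c) * t i
    linarith
  -- above the threshold the weights vanish: all the mass sits on the `k` smallest values
  have hhighZero : ∀ i ∈ ({i | ¬ i.val < k} : Finset (Fin n)), (μ i - c) * t i = 0 :=
    (sum_eq_zero_iff_of_nonneg hhighNonneg).mp (le_antisymm hhighSum (sum_nonneg hhighNonneg))
  rw [mul_sum, ← sub_nonpos, ← sum_sub_distrib]
  refine sum_nonpos fun i _ => ?_
  by_cases hik : i.val < k
  · nlinarith [hlow i hik, hμ i, ht₀ i, mul_nonneg (hμ i) (ht₀ i)]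
  · have := hhighZero i (by simpa using hik)
    linear_combination μ i * this

lemma sum_sq_mul_le_sq_sum_val_lt (hμ : Monotone μ) (hμ₀ : ∀ i, 0 ≤ μ i)
    (ht₀ : ∀ i, 0 ≤ t i) (ht₁ : ∀ i, t i ≤ 1) (hts : ∑ i, t i = k)
    (hmin : ∑ i, μ i * t i ≤ ∑ i with i.val < k, μ i) :
    ∑ i, μ i ^ 2 * t i ≤ (∑ i with i.val < k, μ i) ^ 2 := by
  set S := ∑ i with i.val < k, μ i
  obtain ⟨c, hlow, hhigh, hcS⟩ : ∃ c, (∀ i : Fin n, i.val < k → μ i ≤ c) ∧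
      (∀ i : Fin n, k ≤ i.val → c ≤ μ i) ∧ c ≤ S := by
    rcases Nat.eq_zero_or_pos k with rfl | hk
    · exact ⟨0, by simp, fun i _ => hμ₀ i, by simp [S]⟩
    · have hkn : k - 1 < n := by have := le_of_sum_eq_of_le_one ht₁ hts; omega
      refine ⟨μ ⟨k - 1, hkn⟩, fun i hi => hμ ?_, fun i hi => hμ ?_,
        single_le_sum (fun i _ => hμ₀ i) (by simp; omega)⟩
      all_goals rw [Fin.le_def]; simp only; omega
  calc ∑ i, μ i ^ 2 * t i ≤ c * ∑ i, μ i * t i :=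
        sum_sq_mul_le_mul_sum_mul hμ₀ ht₀ ht₁ hts hlow hhigh hmin
    _ ≤ S * S := mul_le_mul hcS hmin (sum_nonneg fun i _ => mul_nonneg (hμ₀ i) (ht₀ i))
        (sum_nonneg fun i _ => hμ₀ i)
    _ = S ^ 2 := (sq S).symm

end Scalar

section Frobenius

variable {a b : ℕ}

lemma frob2_nonneg (M : Matrix (Fin a) (Fin b) ℝ) : 0 ≤ frob2 M := by
  unfold frob2; positivity

lemma frob_smul (c : ℝ) (M : Matrix (Fin a) (Fin b) ℝ) : frob (c • M) = |c| * frob M := by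
  have : frob2 (c • M) = c ^ 2 * frob2 M := by
    simp only [frob2, Matrix.smul_apply, smul_eq_mul, mul_pow, mul_sum]
  rw [frob, frob, this, Real.sqrt_mul (sq_nonneg c), Real.sqrt_sq_eq_abs]

lemma frob2_eq_trace (M : Matrix (Fin a) (Fin b) ℝ) : frob2 M = (Mᵀ * M).trace := by
  simp only [frob2, trace, Matrix.diag, mul_apply, transpose_apply, sq]
  exact sum_comm

lemma trace_transpose_mul_diagonal_mul (d : Fin a → ℝ) (W : Matrix (Fin a) (Fin b) ℝ) :
    (Wᵀ * diagonal d * W).trace = ∑ i, d i * ∑ j, W i j ^ 2 := by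
  simp only [trace, Matrix.diag, mul_apply, transpose_apply, diagonal_apply, mul_ite, mul_zero,
    sum_ite_eq', mem_univ, if_true, mul_sum]
  rw [sum_comm]
  exact sum_congr rfl fun i _ => sum_congr rfl fun j _ => by ring

lemma frob2_eq_of_transpose_mul_self_eq_one {W : Matrix (Fin a) (Fin b) ℝ} (hW : Wᵀ * W = 1) :
    frob2 W = b := by
  simp [frob2_eq_trace, hW]

-- `W Wᵀ` is a symmetric idempotent, so each diagonal entry `p` satisfies `p = ∑ⱼ pᵢⱼ² ≥ p²`
lemma sum_sq_row_le_one_of_transpose_mul_self_eq_one {W : Matrix (Fin a) (Fin b) ℝ}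
    (hW : Wᵀ * W = 1) (i : Fin a) : ∑ j, W i j ^ 2 ≤ 1 := by
  set P := W * Wᵀ
  have hPP : P * P = P := by rw [Matrix.mul_assoc, ← Matrix.mul_assoc Wᵀ, hW, Matrix.one_mul]
  have hPsymm : ∀ j, P j i = P i j := fun j => by
    simp only [P, mul_apply, transpose_apply, mul_comm]
  have hPdiag : P i i = ∑ j, P i j ^ 2 := by
    conv_lhs => rw [← hPP, mul_apply]
    exact sum_congr rfl fun j _ => by rw [hPsymm, sq]
  have hrow : P i i = ∑ j, W i j ^ 2 := by simp [P, mul_apply, sq]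
  have hsq : P i i ^ 2 ≤ P i i :=
    hPdiag ▸ single_le_sum (fun j _ => sq_nonneg (P i j)) (mem_univ i)
  have hnonneg : 0 ≤ P i i := hrow ▸ sum_nonneg fun j _ => sq_nonneg (W i j)
  rw [← hrow]
  nlinarith

lemma frob2_mul_eq_trace {c : ℕ} (M : Matrix (Fin a) (Fin b) ℝ) (V : Matrix (Fin b) (Fin c) ℝ) :
    frob2 (M * V) = (Vᵀ * (Mᵀ * M) * V).trace := by
  rw [frob2_eq_trace, transpose_mul, Matrix.mul_assoc, Matrix.mul_assoc, Matrix.mul_assoc]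

lemma trace_transpose_mul_conj_diagonal_mul (U : Matrix (Fin a) (Fin a) ℝ) (d : Fin a → ℝ)
    (V : Matrix (Fin a) (Fin b) ℝ) :
    (Vᵀ * (U * diagonal d * Uᵀ) * V).trace = ∑ i, d i * ∑ j, (Uᵀ * V) i j ^ 2 := by
  rw [← trace_transpose_mul_diagonal_mul]
  simp only [transpose_mul, transpose_transpose, Matrix.mul_assoc]

end Frobenius

section Spectral

variable {ι : Type*} [Fintype ι] [DecidableEq ι] {M : Matrix ι ι ℝ}

lemma _root_.Matrix.IsHermitian.transpose_eigenvectorUnitary_mul_self (hM : M.IsHermitian) :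
    (hM.eigenvectorUnitary : Matrix ι ι ℝ)ᵀ * hM.eigenvectorUnitary = 1 := by
  rw [← conjTranspose_eq_transpose_of_trivial, ← star_eq_conjTranspose, Unitary.coe_star_mul_self]

lemma _root_.Matrix.IsHermitian.eigenvectorUnitary_mul_transpose_self (hM : M.IsHermitian) :
    (hM.eigenvectorUnitary : Matrix ι ι ℝ) * (hM.eigenvectorUnitary : Matrix ι ι ℝ)ᵀ = 1 := by
  rw [← conjTranspose_eq_transpose_of_trivial, ← star_eq_conjTranspose,
    Unitary.mul_star_self_of_mem hM.eigenvectorUnitary.2]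

lemma _root_.Matrix.IsHermitian.eq_eigenvectorUnitary_mul_diagonal_mul_transpose
    (hM : M.IsHermitian) :
    M = hM.eigenvectorUnitary * diagonal hM.eigenvalues *
      (hM.eigenvectorUnitary : Matrix ι ι ℝ)ᵀ := by
  conv_lhs => rw [hM.spectral_theorem, Unitary.conjStarAlgAut_apply]
  rw [star_eq_conjTranspose, conjTranspose_eq_transpose_of_trivial]
  rfl

end Spectral

section Gram

variable {m n : ℕ}

def sortedGramEigenvalues (X : Matrix (Fin m) (Fin n) ℝ) : Fin n → ℝ :=
  (isHermitian_conjTranspose_mul_self X).eigenvalues ∘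
    Tuple.sort (isHermitian_conjTranspose_mul_self X).eigenvalues

lemma monotone_sortedGramEigenvalues (X : Matrix (Fin m) (Fin n) ℝ) :
    Monotone (sortedGramEigenvalues X) :=
  Tuple.monotone_sort _

lemma sortedGramEigenvalues_nonneg (X : Matrix (Fin m) (Fin n) ℝ) (i : Fin n) :
    0 ≤ sortedGramEigenvalues X i :=
  (posSemidef_conjTranspose_mul_self X).eigenvalues_nonneg _

lemma sVal_sq (X : Matrix (Fin m) (Fin n) ℝ) (i : Fin n) :
    sVal X i ^ 2 = sortedGramEigenvalues X i.rev :=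
  Real.sq_sqrt (sortedGramEigenvalues_nonneg X i.rev)

lemma tailSum_eq_sum_sortedGramEigenvalues (r : ℕ) (X : Matrix (Fin m) (Fin n) ℝ) :
    tailSum r X = ∑ j with j.val < n - r, sortedGramEigenvalues X j := by
  unfold tailSum
  refine sum_nbij' Fin.rev Fin.rev ?_ ?_ (fun i _ => Fin.rev_rev i) (fun i _ => Fin.rev_rev i)
    fun i _ => sVal_sq X i
  all_goals intro i hi; simp only [mem_filter, mem_univ, true_and, Fin.val_rev] at hi ⊢; omega

theorem frob2_transpose_mul_self_mul_le {k : ℕ} (X : Matrix (Fin m) (Fin n) ℝ)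
    {V : Matrix (Fin n) (Fin k) ℝ} (hV : Vᵀ * V = 1)
    (hmin : frob2 (X * V) ≤ ∑ j with j.val < k, sortedGramEigenvalues X j) :
    frob2 (Xᵀ * X * V) ≤ (∑ j with j.val < k, sortedGramEigenvalues X j) ^ 2 := by
  set H := isHermitian_conjTranspose_mul_self X
  set U : Matrix (Fin n) (Fin n) ℝ := ↑H.eigenvectorUnitary
  set ev := H.eigenvalues
  set σ := Tuple.sort ev
  set W := Uᵀ * V with hWdef
  have hgram : Xᵀ * X = U * diagonal ev * Uᵀ := by
    rw [← conjTranspose_eq_transpose_of_trivial]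
    exact H.eq_eigenvectorUnitary_mul_diagonal_mul_transpose
  have hgram_sq : (Xᵀ * X)ᵀ * (Xᵀ * X) = U * diagonal (fun i => ev i ^ 2) * Uᵀ := by
    rw [hgram]
    simp only [transpose_mul, transpose_transpose, diagonal_transpose, Matrix.mul_assoc]
    rw [← Matrix.mul_assoc Uᵀ U, H.transpose_eigenvectorUnitary_mul_self, Matrix.one_mul,
      ← Matrix.mul_assoc (diagonal ev), diagonal_mul_diagonal]
    simp only [sq]
  have hW : Wᵀ * W = 1 := by
    rw [hWdef, transpose_mul, transpose_transpose, Matrix.mul_assoc, ← Matrix.mul_assoc U,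
      H.eigenvectorUnitary_mul_transpose_self, Matrix.one_mul, hV]
  have hXV : frob2 (X * V) = ∑ i, ev i * ∑ j, W i j ^ 2 := by
    rw [frob2_mul_eq_trace, hgram, trace_transpose_mul_conj_diagonal_mul]
  have hXXV : frob2 (Xᵀ * X * V) = ∑ i, ev i ^ 2 * ∑ j, W i j ^ 2 := by
    rw [frob2_mul_eq_trace, hgram_sq, trace_transpose_mul_conj_diagonal_mul]
  rw [hXXV, ← Equiv.sum_comp σ]
  refine sum_sq_mul_le_sq_sum_val_lt (monotone_sortedGramEigenvalues X)
    (sortedGramEigenvalues_nonneg X) (fun i => sum_nonneg fun j _ => sq_nonneg _)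
    (fun i => sum_sq_row_le_one_of_transpose_mul_self_eq_one hW _) ?_ ?_
  · rw [Equiv.sum_comp σ (fun i => ∑ j, W i j ^ 2)]
    exact frob2_eq_of_transpose_mul_self_eq_one hW
  · rwa [Equiv.sum_comp σ (fun i => ev i * ∑ j, W i j ^ 2), ← hXV]

end Gram

theorem stmt5_general (m n r l : ℕ)
    (A : Matrix (Fin m) (Fin n) ℝ →ₗ[ℝ] (Fin l → ℝ)) (b : Fin l → ℝ)
    (X : Matrix (Fin m) (Fin n) ℝ) (V : Matrix (Fin n) (Fin (n - r)) ℝ)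
    (hV : Vᵀ * V = 1) (hE : frob2 (X * V) = tailSum r X) :
    frob ((2 : ℝ) • (Xᵀ * X * V)) ≤
      2 * (tailSum r X + (1 / 2) * enorm2 (A X - b)) := by
  have hTail := tailSum_eq_sum_sortedGramEigenvalues r X
  have hGrad : frob2 (Xᵀ * X * V) ≤ tailSum r X ^ 2 := by
    rw [hTail] at hE ⊢
    exact frob2_transpose_mul_self_mul_le X hV hE.le
  have hGradNorm : frob (Xᵀ * X * V) ≤ tailSum r X :=
    Real.sqrt_le_iff.mpr ⟨hE ▸ frob2_nonneg _, hGrad⟩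
  have hResidual : 0 ≤ enorm2 (A X - b) := sum_nonneg fun i _ => sq_nonneg _
  rw [frob_smul, abs_two]
  linarith

/-- for `V ∈ E(X)`, the `V`-gradient of
`g(X,V) = ‖XV‖_F² + (1/2)‖A(X)-b‖²`, namely `2XᵀXV`, satisfies `‖∇_V g(X,V)‖_F ≤ 2 f(X)`. -/
theorem stmt5 (m n r l : ℕ) (hmn : n ≤ m) (hr : r ≤ n)
    (A : Matrix (Fin m) (Fin n) ℝ →ₗ[ℝ] (Fin l → ℝ)) (b : Fin l → ℝ)
    (X : Matrix (Fin m) (Fin n) ℝ) (V : Matrix (Fin n) (Fin (n - r)) ℝ)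
    (hV : Vᵀ * V = 1) (hE : frob2 (X * V) = tailSum r X) :
    frob ((2 : ℝ) • (Xᵀ * X * V)) ≤
      2 * (tailSum r X + (1 / 2) * enorm2 (A X - b)) :=
  stmt5_general m n r l A b X V hV hE

end RankEB
end
end

section
/- Let f: R^d → [0, ∞) be lower semicontinuous with zero set S = f^{-1}(0) nonempty. Assume there exist c > 0, R > 0 such that m_f(x) := dist(0, ∂f(x)) ≥ c for all ‖x‖ ≥ R, and that near each point of S a Łojasiewicz-type inequality m_f(x) ≥ c' f(x)^{1−τ} holds (τ ∈ (0,1]). Then S is compact and there exists C > 0 such that C·dist(x, S) ≤ f(x)^τ + f(x) for all x ∈ R^d. -/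
/-!
Minimising `g + m * √(‖· - x₀‖ ^ 2 + δ ^ 2)` over a large closed ball around `x₀` yields either
a zero of `g` at distance at most `g x₀ / m + δ` from `x₀`, or an interior local minimiser at
which `g` has a Fréchet subgradient of norm `< m` (the gradient of the smooth penalty).
Hence `dist(x₀, g⁻¹{0}) ≤ g x₀ / m` wherever the subgradients of `g` have norm at least `m`.

Far out this applies to `g = f` and `m = c`. On a sublevel set `{f < μ}`, compactness of `S`
makes the Łojasiewicz inequality uniform, `c₁ f ^ (1 - τ) ≤ m_f`, and concavity of `t ↦ t ^ τ`
turns it into the lower bound `τ c₁` for the subgradients of `g = f ^ τ`, whence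
`dist(x, S) ≤ f(x) ^ τ / (τ c₁)`.
-/

open Filter Topology

noncomputable section

namespace RankEB

def FSubE {d : ℕ} (f : EuclideanSpace ℝ (Fin d) → ℝ) (x v : EuclideanSpace ℝ (Fin d)) : Prop :=
  ∀ ε > (0:ℝ), ∃ δ > (0:ℝ), ∀ y, ‖y - x‖ < δ →
    f y - f x - (inner ℝ v (y - x) : ℝ) ≥ -(ε * ‖y - x‖)

def LSubE {d : ℕ} (f : EuclideanSpace ℝ (Fin d) → ℝ) (x v : EuclideanSpace ℝ (Fin d)) : Prop :=
  ∃ xs vs : ℕ → EuclideanSpace ℝ (Fin d),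
    (∀ k, FSubE f (xs k) (vs k)) ∧
    Filter.Tendsto xs Filter.atTop (nhds x) ∧
    Filter.Tendsto (fun k => f (xs k)) Filter.atTop (nhds (f x)) ∧
    Filter.Tendsto vs Filter.atTop (nhds v)

def slopeE {d : ℕ} (f : EuclideanSpace ℝ (Fin d) → ℝ) (x : EuclideanSpace ℝ (Fin d)) : ℝ :=
  sInf {t | ∃ v, LSubE f x v ∧ t = ‖v‖}

theorem _root_.IsCompact.exists_pos_eventually_nhdsSet {X : Type*} [TopologicalSpace X] {s : Set X}
    (hs : IsCompact s) {P : ℝ → X → Prop} (hP : ∀ ⦃c c' x⦄, c' ≤ c → P c x → P c' x)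
    (h : ∀ x ∈ s, ∃ c > 0, ∀ᶠ y in 𝓝 x, P c y) : ∃ c > 0, ∀ᶠ y in 𝓝ˢ s, P c y := by
  refine hs.induction_on (p := fun t => ∃ c > 0, ∀ᶠ y in 𝓝ˢ t, P c y) ⟨1, one_pos, by simp⟩
    (fun t t' htt' ⟨c, hc, hPt'⟩ => ⟨c, hc, hPt'.filter_mono (nhdsSet_mono htt')⟩) ?_ ?_
  · rintro t t' ⟨c, hc, hPt⟩ ⟨c', hc', hPt'⟩
    refine ⟨min c c', lt_min hc hc', ?_⟩
    rw [nhdsSet_union, eventually_sup]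
    exact ⟨hPt.mono fun _ => hP (min_le_left c c'), hPt'.mono fun _ => hP (min_le_right c c')⟩
  · intro x hx
    obtain ⟨c, hc, hPx⟩ := h x hx
    exact ⟨_, mem_nhdsWithin_of_mem_nhds hPx.eventually_nhds, c, hc,
      eventually_nhdsSet_iff_forall.2 fun y hy => hy⟩

theorem _root_.LowerSemicontinuous.exists_pos_le_of_isCompact {X : Type*} [TopologicalSpace X]
    {f : X → ℝ} (hf : LowerSemicontinuous f) {K : Set X} (hK : IsCompact K)
    (hpos : ∀ x ∈ K, 0 < f x) : ∃ μ > 0, ∀ x ∈ K, μ ≤ f x := by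
  rcases K.eq_empty_or_nonempty with rfl | hne
  · exact ⟨1, one_pos, by simp⟩
  obtain ⟨z, hzK, hzmin⟩ := (hf.lowerSemicontinuousOn K).exists_isMinOn hne hK
  exact ⟨f z, hpos z hzK, hzmin⟩

theorem _root_.LowerSemicontinuous.rpow_const_of_nonneg {X : Type*} [TopologicalSpace X] {f : X → ℝ}
    (hf : LowerSemicontinuous f) (hf0 : ∀ x, 0 ≤ f x) {τ : ℝ} (hτ : 0 ≤ τ) :
    LowerSemicontinuous fun x => f x ^ τ := by
  have hmono : Monotone fun t : ℝ => max t 0 ^ τ := fun a b hab =>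
    Real.rpow_le_rpow (le_max_right _ _) (max_le_max hab le_rfl) hτ
  have hcont : Continuous fun t : ℝ => max t 0 ^ τ :=
    (continuous_id.max continuous_const).rpow_const fun _ => Or.inr hτ
  simpa [Function.comp_def, max_eq_left (hf0 _)] using hcont.comp_lowerSemicontinuous hf hmono

section

variable {d : ℕ}

local notation "E" => EuclideanSpace ℝ (Fin d)

theorem slopeE_le_norm {f : E → ℝ} {x v : E} (h : FSubE f x v) : slopeE f x ≤ ‖v‖ :=
  csInf_le ⟨0, by rintro t ⟨w, -, rfl⟩; positivity⟩
    ⟨v, ⟨fun _ => x, fun _ => v, fun _ => h, tendsto_const_nhds, tendsto_const_nhds,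
      tendsto_const_nhds⟩, rfl⟩

theorem fSubE_neg_of_isLocalMin_add {f h : E → ℝ} {z v : E}
    (hmin : IsLocalMin (fun w => f w + h w) z) (hh : HasFDerivAt h (innerSL ℝ v) z) :
    FSubE f z (-v) := by
  intro ε hε
  obtain ⟨δ, hδ, hball⟩ := Metric.eventually_nhds_iff.1 (hmin.and (hh.isLittleO.def hε))
  refine ⟨δ, hδ, fun w hw => ?_⟩
  obtain ⟨hle, hlo⟩ := hball (by rwa [dist_eq_norm])
  dsimp only at hle
  simp only [innerSL_apply_apply, Real.norm_eq_abs, inner_neg_left] at hlo ⊢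
  linarith [le_abs_self (h w - h z - inner ℝ v (w - z))]

theorem fSubE_zero_of_isLocalMin {f : E → ℝ} {z : E} (hmin : IsLocalMin f z) : FSubE f z 0 := by
  simpa using fSubE_neg_of_isLocalMin_add (h := fun _ => 0) (v := 0)
    (by simpa using hmin) (by simpa using hasFDerivAt_const (0 : ℝ) z)

theorem hasFDerivAt_penalty (x₀ z : E) (m : ℝ) {δ : ℝ} (hδ : δ ≠ 0) :
    HasFDerivAt (fun w => m * √(‖w - x₀‖ ^ 2 + δ ^ 2))
      (innerSL ℝ ((m / √(‖z - x₀‖ ^ 2 + δ ^ 2)) • (z - x₀))) z := by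
  have hpos : 0 < ‖z - x₀‖ ^ 2 + δ ^ 2 := by positivity
  refine ((((hasFDerivAt_id z).sub_const x₀).norm_sq.add_const (δ ^ 2)).sqrt
    hpos.ne').const_mul m |>.congr_fderiv ?_
  ext u
  simp only [id_eq, map_sub, ContinuousLinearMap.comp_id, smul_apply,
    sub_apply, coe_innerSL_apply, nsmul_eq_mul, smul_eq_mul, map_smul]
  ring

theorem exists_fSubE_norm_lt_of_isLocalMin_add_penalty {f : E → ℝ} {x₀ z : E} {m δ : ℝ}
    (hm : 0 < m) (hδ : δ ≠ 0) (hmin : IsLocalMin (fun w => f w + m * √(‖w - x₀‖ ^ 2 + δ ^ 2)) z) :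
    ∃ v, FSubE f z v ∧ ‖v‖ < m := by
  set s := √(‖z - x₀‖ ^ 2 + δ ^ 2)
  have hs : ‖z - x₀‖ < s := Real.lt_sqrt_of_sq_lt (lt_add_of_pos_right _ (by positivity))
  have hs0 : 0 < s := (norm_nonneg _).trans_lt hs
  refine ⟨_, fSubE_neg_of_isLocalMin_add hmin (hasFDerivAt_penalty x₀ z m hδ), ?_⟩
  rw [norm_neg, norm_smul, Real.norm_of_nonneg (by positivity), div_mul_eq_mul_div,
    div_lt_iff₀ hs0]
  exact mul_lt_mul_of_pos_left hs hm

theorem exists_zero_dist_le_of_fSubE_norm_ge {g : E → ℝ} (hg0 : ∀ x, 0 ≤ g x)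
    (hg : LowerSemicontinuous g) {x₀ : E} {m r δ : ℝ} (hm : 0 < m) (hδ : 0 < δ)
    (hr : g x₀ / m + δ < r)
    (hsub : ∀ y, dist y x₀ ≤ r → 0 < g y → g y ≤ g x₀ → ∀ v, FSubE g y v → m ≤ ‖v‖) :
    ∃ z, g z = 0 ∧ dist z x₀ ≤ g x₀ / m + δ := by
  set P : E → ℝ := fun w => m * √(‖w - x₀‖ ^ 2 + δ ^ 2)
  have hP : Continuous P := by fun_prop
  have hr0 : 0 < r := lt_of_le_of_lt (by have := hg0 x₀; positivity) hr
  obtain ⟨z, hzr, hzmin⟩ := ((hg.add hP.lowerSemicontinuous).lowerSemicontinuousOn _).exists_isMinOn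
    ⟨x₀, Metric.mem_closedBall_self hr0.le⟩ (isCompact_closedBall x₀ r)
  have hPx₀ : P x₀ = m * δ := by simp [P, Real.sqrt_sq hδ.le]
  have hPz_norm : m * ‖z - x₀‖ ≤ P z := mul_le_mul_of_nonneg_left
    (Real.le_sqrt_of_sq_le (le_add_of_nonneg_right (sq_nonneg δ))) hm.le
  have hPz_δ : m * δ ≤ P z := mul_le_mul_of_nonneg_left
    (Real.le_sqrt_of_sq_le (le_add_of_nonneg_left (sq_nonneg _))) hm.le
  have hle : g z + P z ≤ g x₀ + m * δ := hPx₀ ▸ hzmin (Metric.mem_closedBall_self hr0.le)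
  have hdist : dist z x₀ ≤ g x₀ / m + δ := by
    rw [dist_eq_norm, div_add' _ _ _ hm.ne', le_div_iff₀ hm]
    nlinarith [hg0 z]
  refine ⟨z, le_antisymm (not_lt.1 fun hz0 => ?_) (hg0 z), hdist⟩
  have hloc : IsLocalMin (fun w => g w + P w) z :=
    hzmin.isLocalMin (Metric.closedBall_mem_nhds_of_mem (hdist.trans_lt hr))
  obtain ⟨v, hv, hvm⟩ := exists_fSubE_norm_lt_of_isLocalMin_add_penalty hm hδ.ne' hloc
  exact hvm.not_ge (hsub z hzr hz0 (by linarith) v hv)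

theorem infDist_zeroSet_le_of_fSubE_norm_ge {g : E → ℝ} (hg0 : ∀ x, 0 ≤ g x)
    (hg : LowerSemicontinuous g) {x₀ : E} {m r : ℝ} (hm : 0 < m) (hr : g x₀ < m * r)
    (hsub : ∀ y, dist y x₀ ≤ r → 0 < g y → g y ≤ g x₀ → ∀ v, FSubE g y v → m ≤ ‖v‖) :
    Metric.infDist x₀ (g ⁻¹' {0}) ≤ g x₀ / m := by
  have hgap : 0 < r - g x₀ / m := by rw [sub_pos, div_lt_iff₀' hm]; exact hr
  refine le_of_forall_pos_le_add fun ε hε => ?_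
  obtain ⟨z, hz, hzx₀⟩ := exists_zero_dist_le_of_fSubE_norm_ge hg0 hg hm
    (lt_min hε (half_pos hgap)) (by linarith [min_le_right ε ((r - g x₀ / m) / 2)]) hsub
  calc Metric.infDist x₀ (g ⁻¹' {0}) ≤ dist z x₀ := by
        rw [dist_comm]; exact Metric.infDist_le_dist_of_mem hz
    _ ≤ g x₀ / m + ε := hzx₀.trans (by gcongr; exact min_le_left _ _)

theorem FSubE.of_rpow {f : E → ℝ} (hf : ∀ x, 0 ≤ f x) {τ : ℝ} (hτ0 : 0 < τ) (hτ1 : τ ≤ 1)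
    {y w : E} (hy : 0 < f y) (h : FSubE (fun x => f x ^ τ) y w) :
    FSubE f y ((f y ^ (1 - τ) / τ) • w) := by
  set k := f y ^ (1 - τ) / τ
  have hk : 0 < k := by positivity
  -- concavity of `t ↦ t ^ τ`, in the form of the weighted AM-GM inequality
  have hconc : ∀ x, k * (f x ^ τ - f y ^ τ) ≤ f x - f y := by
    intro x
    have amgm := Real.geom_mean_le_arith_mean2_weighted hτ0.le (by linarith) (hf x) hy.le
      (by ring : τ + (1 - τ) = 1)
    have hsplit : f y ^ (1 - τ) * f y ^ τ = f y := by
      rw [← Real.rpow_add hy]; norm_num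
    rw [div_mul_eq_mul_div, div_le_iff₀ hτ0]
    nlinarith
  intro ε hε
  obtain ⟨δ, hδ, hball⟩ := h (ε / k) (by positivity)
  refine ⟨δ, hδ, fun x hx => ?_⟩
  have hscaled := mul_le_mul_of_nonneg_left (hball x hx).le hk.le
  rw [real_inner_smul_left]
  have hk' : k * (ε / k) = ε := mul_div_cancel₀ ε hk.ne'
  nlinarith [hconc x]

theorem le_norm_of_fSubE_rpow {f : E → ℝ} (hf : ∀ x, 0 ≤ f x) {τ : ℝ} (hτ0 : 0 < τ)
    (hτ1 : τ ≤ 1) {c : ℝ} {y w : E} (hy : 0 < f y) (hloj : c * f y ^ (1 - τ) ≤ slopeE f y)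
    (h : FSubE (fun x => f x ^ τ) y w) : τ * c ≤ ‖w‖ := by
  have hslope := hloj.trans (slopeE_le_norm (h.of_rpow hf hτ0 hτ1 hy))
  rw [norm_smul, Real.norm_of_nonneg (by positivity), div_mul_eq_mul_div, le_div_iff₀ hτ0,
    mul_right_comm, mul_assoc] at hslope
  exact le_of_mul_le_mul_left (by linarith) (Real.rpow_pos_of_pos hy _)

theorem norm_lt_of_slopeE_ge {f : E → ℝ} (hf : ∀ x, 0 ≤ f x) {c R : ℝ} (hc : 0 < c)
    (hcoer : ∀ x, R ≤ ‖x‖ → c ≤ slopeE f x) {x : E} (hx : f x = 0) : ‖x‖ < R := by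
  have hmin : IsLocalMin f x := Eventually.of_forall fun y => hx ▸ hf y
  by_contra! hR
  have h0 : slopeE f x ≤ 0 := by simpa using slopeE_le_norm (fSubE_zero_of_isLocalMin hmin)
  linarith [hcoer x hR]

theorem exists_mul_rpow_le_slopeE {f : E → ℝ} (hf : ∀ x, 0 ≤ f x) (hlsc : LowerSemicontinuous f)
    {τ : ℝ} (hτ1 : τ ≤ 1) {c R : ℝ} (hc : 0 < c) (hcoer : ∀ x, R ≤ ‖x‖ → c ≤ slopeE f x)
    (hS : IsCompact (f ⁻¹' {0}))
    (hloc : ∀ xbar ∈ f ⁻¹' {0}, ∃ c' > (0:ℝ), ∃ ε > (0:ℝ), ∀ x, ‖x - xbar‖ < ε →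
      c' * f x ^ (1 - τ) ≤ slopeE f x) :
    ∃ c₁ > (0:ℝ), ∃ μ > (0:ℝ), ∀ y, 0 < f y → f y < μ → c₁ * f y ^ (1 - τ) ≤ slopeE f y := by
  obtain ⟨c₀, hc₀, hnear⟩ := hS.exists_pos_eventually_nhdsSet
    (P := fun c y => c * f y ^ (1 - τ) ≤ slopeE f y)
    (fun c c' y hc' h => (mul_le_mul_of_nonneg_right hc' (by have := hf y; positivity)).trans h)
    fun xbar hxbar => by
      obtain ⟨c', hc', ε, hε, H⟩ := hloc xbar hxbar
      exact ⟨c', hc', Metric.eventually_nhds_iff.2 ⟨ε, hε, fun y hy => H y (by rwa [← dist_eq_norm])⟩⟩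
  obtain ⟨U, hUo, hSU, hUnear⟩ := mem_nhdsSet_iff_exists.1 hnear
  obtain ⟨μ, hμ, hμK⟩ := hlsc.exists_pos_le_of_isCompact ((isCompact_closedBall 0 R).diff hUo)
    fun y hy => (hf y).lt_of_ne fun h => hy.2 (hSU h.symm)
  refine ⟨min c₀ (c / μ ^ (1 - τ)), by positivity, μ, hμ, fun y hy hyμ => ?_⟩
  by_cases hyU : y ∈ U
  · exact (mul_le_mul_of_nonneg_right (min_le_left _ _) (by positivity)).trans (hUnear hyU)
  by_cases hyR : R ≤ ‖y‖
  · calc min c₀ (c / μ ^ (1 - τ)) * f y ^ (1 - τ) ≤ c / μ ^ (1 - τ) * μ ^ (1 - τ) :=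
          mul_le_mul (min_le_right _ _) (Real.rpow_le_rpow hy.le hyμ.le (by linarith))
            (by positivity) (by positivity)
      _ = c := div_mul_cancel₀ _ (by positivity)
      _ ≤ slopeE f y := hcoer y hyR
  · exact absurd (hμK y ⟨by simpa using (not_le.1 hyR).le, hyU⟩) hyμ.not_ge

theorem infDist_zeroSet_le_rpow {f : E → ℝ} (hf : ∀ x, 0 ≤ f x) (hlsc : LowerSemicontinuous f)
    {τ : ℝ} (hτ0 : 0 < τ) (hτ1 : τ ≤ 1) {c₁ μ : ℝ} (hc₁ : 0 < c₁)
    (hloj : ∀ y, 0 < f y → f y < μ → c₁ * f y ^ (1 - τ) ≤ slopeE f y) {x : E} (hx : f x < μ) :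
    Metric.infDist x (f ⁻¹' {0}) ≤ f x ^ τ / (τ * c₁) := by
  have hzero : (fun y => f y ^ τ) ⁻¹' {0} = f ⁻¹' {0} := by
    ext y; simp [Real.rpow_eq_zero (hf y) hτ0.ne']
  rw [← hzero]
  refine infDist_zeroSet_le_of_fSubE_norm_ge (fun y => by have := hf y; positivity)
    (hlsc.rpow_const_of_nonneg hf hτ0.le) (by positivity) (r := f x ^ τ / (τ * c₁) + 1) ?_
    fun y _ hy0 hyx w hw => ?_
  · rw [mul_add, mul_div_cancel₀ _ (by positivity)]
    linarith [mul_pos hτ0 hc₁]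
  · have hfy : 0 < f y := (hf y).lt_of_ne fun h => by simp [← h, Real.zero_rpow hτ0.ne'] at hy0
    have hfyx : f y ≤ f x := (Real.rpow_le_rpow_iff (hf y) (hf x) hτ0).1 hyx
    exact le_norm_of_fSubE_rpow hf hτ0 hτ1 hfy (hloj y hfy (hfyx.trans_lt hx)) hw

theorem infDist_zeroSet_le_of_slopeE_ge {f : E → ℝ} (hf : ∀ x, 0 ≤ f x)
    (hlsc : LowerSemicontinuous f) {c R : ℝ} (hc : 0 < c) (hcoer : ∀ x, R ≤ ‖x‖ → c ≤ slopeE f x)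
    {s₀ : E} (hs₀ : f s₀ = 0) (x : E) : Metric.infDist x (f ⁻¹' {0}) ≤ 2 * R + f x / c := by
  have hs₀R : ‖s₀‖ < R := norm_lt_of_slopeE_ge hf hc hcoer hs₀
  have hfx : 0 ≤ f x / c := div_nonneg (hf x) hc.le
  rcases lt_or_ge (f x) (c * (‖x‖ - R)) with hfar | hnear
  · -- the ball of radius `‖x‖ - R` around `x` stays where the slope is at least `c`
    refine (infDist_zeroSet_le_of_fSubE_norm_ge hf hlsc hc hfar fun y hy _ _ v hv =>
      (hcoer y ?_).trans (slopeE_le_norm hv)).trans (by linarith [norm_nonneg s₀])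
    linarith [norm_sub_norm_le x y, dist_eq_norm y x, norm_sub_rev x y]
  · have hxR : ‖x‖ ≤ R + f x / c := by
      rw [← sub_le_iff_le_add', le_div_iff₀ hc]; linarith
    calc Metric.infDist x (f ⁻¹' {0}) ≤ dist x s₀ := Metric.infDist_le_dist_of_mem hs₀
      _ ≤ ‖x‖ + ‖s₀‖ := dist_le_norm_add_norm x s₀
      _ ≤ 2 * R + f x / c := by linarith

end

/-- global error bound: if the slope `m_f` is bounded below at infinity and
a local Łojasiewicz inequality holds near the zero set `S = f⁻¹(0)`, then `S` is compact
and a global Hölderian error bound `C · dist(x,S) ≤ f(x)^τ + f(x)` holds. -/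
theorem stmt19 (d : ℕ) (f : EuclideanSpace ℝ (Fin d) → ℝ)
    (hfnn : ∀ x, 0 ≤ f x) (hlsc : LowerSemicontinuous f)
    (S : Set (EuclideanSpace ℝ (Fin d))) (hS : S = f ⁻¹' {0}) (hSne : S.Nonempty)
    (τ : ℝ) (hτ0 : 0 < τ) (hτ1 : τ ≤ 1)
    (hcoer : ∃ c > (0:ℝ), ∃ R > (0:ℝ), ∀ x, R ≤ ‖x‖ → c ≤ slopeE f x)
    (hloc : ∀ xbar ∈ S, ∃ c' > (0:ℝ), ∃ ε > (0:ℝ), ∀ x, ‖x - xbar‖ < ε →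
      c' * f x ^ (1 - τ) ≤ slopeE f x) :
    IsCompact S ∧ ∃ C > (0:ℝ), ∀ x, C * Metric.infDist x S ≤ f x ^ τ + f x := by
  subst hS
  obtain ⟨c, hc, R, hR0, hcoer⟩ := hcoer
  obtain ⟨s₀, hs₀⟩ := hSne
  have hclosed : IsClosed (f ⁻¹' {0}) := by
    convert hlsc.isClosed_preimage 0 using 1
    ext x; simpa using (hfnn x).ge_iff_eq'.symm
  have hcpt : IsCompact (f ⁻¹' {0}) := (isCompact_closedBall 0 R).of_isClosed_subset hclosed
    fun x hx => mem_closedBall_zero_iff.2 (norm_lt_of_slopeE_ge hfnn hc hcoer hx).le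
  obtain ⟨c₁, hc₁, μ, hμ, hloj⟩ := exists_mul_rpow_le_slopeE hfnn hlsc hτ1 hc hcoer hcpt hloc
  set A := 2 * R / μ + 1 / c
  refine ⟨hcpt, min (τ * c₁) A⁻¹, by positivity, fun x => ?_⟩
  have hdist := Metric.infDist_nonneg (x := x) (s := f ⁻¹' {0})
  have hfx := hfnn x
  rcases lt_or_ge (f x) μ with hxμ | hxμ
  · have hx := infDist_zeroSet_le_rpow hfnn hlsc hτ0 hτ1 hc₁ hloj hxμ
    calc min (τ * c₁) A⁻¹ * Metric.infDist x (f ⁻¹' {0}) ≤ τ * c₁ * (f x ^ τ / (τ * c₁)) := by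
          gcongr; exact min_le_left _ _
      _ = f x ^ τ := mul_div_cancel₀ _ (by positivity)
      _ ≤ f x ^ τ + f x := le_add_of_nonneg_right hfx
  · have hx : Metric.infDist x (f ⁻¹' {0}) ≤ A * f x := calc
        _ ≤ 2 * R + f x / c := infDist_zeroSet_le_of_slopeE_ge hfnn hlsc hc hcoer hs₀ x
        _ ≤ 2 * R / μ * f x + f x / c :=
            add_le_add_left (by rw [div_mul_eq_mul_div, le_div_iff₀ hμ]; gcongr : 2 * R ≤ 2 * R / μ * f x) _
        _ = A * f x := by ring
    calc min (τ * c₁) A⁻¹ * Metric.infDist x (f ⁻¹' {0}) ≤ A⁻¹ * (A * f x) := by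
          gcongr; exact min_le_right _ _
      _ = f x := inv_mul_cancel_left₀ (by positivity) _
      _ ≤ f x ^ τ + f x := le_add_of_nonneg_left (by positivity)

end RankEB
end
end
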